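/- Let p be a prime and write (p-1)d + 1 = p^a·m with m not divisible by p. Then the Hamming graph H(p,d) has an efficient (1,k)-dominating function if and only if 0 ≤ k ≤ (p-1)d+1 and m divides k. -/

import Mathlib

open SimpleGraph Finset Matrix Polynomial

/-- `f` is an efficient `(j,k)`-dominating function on `G`:
it takes values in `{0,…,j}` and sums to `k` over every closed neighbourhood. -/
def EffDom {V : Type*} [Fintype V] (G : SimpleGraph V) [DecidableRel G.Adj]
    (j k : ℕ) (f : V → ℕ) : Prop :=
  (∀ v, f v ≤ j) ∧ ∀ v : V, f v + ∑ u ∈ G.neighborFinset v, f u = k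

/-- The Hamming graph `H(q,d)`: vertices are the words of length `d` over an alphabet
of size `q`, adjacent iff at Hamming distance `1`. -/
def hammingGraph (q d : ℕ) : SimpleGraph (Fin d → Fin q) where
  Adj x y := hammingDist x y = 1
  symm := ⟨fun x y (h : hammingDist x y = 1) => by rwa [hammingDist_comm]⟩
  loopless := ⟨fun x (h : hammingDist x x = 1) => by simp [hammingDist_self] at h⟩

instance (q d : ℕ) : DecidableRel (hammingGraph q d).Adj :=
  fun _ _ => Nat.decEq _ _

/-!
Summing `f(N[v]) = k` over all `p ^ d` vertices counts each vertex `(p - 1) * d + 1 = p ^ a * m`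
times, so `p ^ d * k = (∑ f) * p ^ a * m` and `m ∣ k` because `m` is prime to `p`; and
`k ≤ |N[v]| = (p - 1) * d + 1`.

Conversely, take as columns `w₁, …, w_d ∈ 𝔽_p^a` the representative of every point of the
projective space `ℙ(𝔽_p^a)`, each `m` times, and `z` zero columns, where `(p - 1) * z + 1 = m`
(this is where `(p - 1) * d + 1 = p ^ a * m` enters). Moving one letter of `x` by `e ≠ 0` moves
its syndrome `∑ xᵢ wᵢ` by `e • wᵢ`, so the syndromes of the closed neighbourhood of any vertex
cover every vector of `𝔽_p^a` exactly `m` times. Hence, for any set `T` of `k / m ≤ p ^ a`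
vectors, the indicator of "syndrome in `T`" is an efficient `(1, k)`-dominating function.
-/

namespace SimpleGraph

variable {V : Type*} [Fintype V] {G : SimpleGraph V} [DecidableRel G.Adj]

lemma sum_sum_neighborFinset {M : Type*} [AddCommMonoid M] (f : V → M) :
    ∑ v, ∑ u ∈ G.neighborFinset v, f u = ∑ u, G.degree u • f u := by
  simp_rw [neighborFinset_eq_filter, sum_filter]
  rw [sum_comm]
  refine sum_congr rfl fun u _ => ?_
  simp_rw [adj_comm _ _ u, ← sum_filter, ← neighborFinset_eq_filter, sum_const,
    card_neighborFinset_eq_degree]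

end SimpleGraph

namespace EffDom

variable {V : Type*} [Fintype V] {G : SimpleGraph V} [DecidableRel G.Adj] {r j k : ℕ} {f : V → ℕ}

lemma le_mul_succ (hG : G.IsRegularOfDegree r) (hf : EffDom G j k f) (v : V) :
    k ≤ j * (r + 1) :=
  calc k = f v + ∑ u ∈ G.neighborFinset v, f u := (hf.2 v).symm
    _ ≤ j + ∑ _u ∈ G.neighborFinset v, j := add_le_add (hf.1 v) (sum_le_sum fun u _ => hf.1 u)
    _ = j * (r + 1) := by
      rw [sum_const, card_neighborFinset_eq_degree, hG v, smul_eq_mul]; ring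

lemma card_mul_eq (hG : G.IsRegularOfDegree r) (hf : EffDom G j k f) :
    Fintype.card V * k = (∑ v, f v) * (r + 1) :=
  calc Fintype.card V * k = ∑ v, (f v + ∑ u ∈ G.neighborFinset v, f u) := by
        simp [hf.2, card_univ]
    _ = (∑ v, f v) * (r + 1) := by
      simp_rw [sum_add_distrib, sum_sum_neighborFinset, hG _, smul_eq_mul, ← mul_sum]; ring

end EffDom

section Hamming

variable {ι β : Type*} [Fintype ι] [DecidableEq ι] [DecidableEq β]

lemma hammingDist_update_of_ne {v : ι → β} {i : ι} {c : β} (hc : c ≠ v i) :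
    hammingDist v (Function.update v i c) = 1 := by
  refine card_eq_one.mpr ⟨i, ?_⟩
  ext j
  rcases eq_or_ne j i with rfl | hj <;> simp [*, Ne.symm hc]

lemma update_injOn_sigma_erase [Fintype β] (v : ι → β) :
    Set.InjOn (fun x : (_ : ι) × β => Function.update v x.1 x.2)
      (univ.sigma fun i => univ.erase (v i) : Finset _) := by
  rintro ⟨i, c⟩ hx ⟨i', c'⟩ hx' h
  simp only [coe_sigma, Set.mem_sigma_iff, coe_univ, Set.mem_univ, coe_erase, Set.mem_sdiff,
    Set.mem_singleton_iff, true_and] at hx hx' h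
  obtain rfl : i = i' := by
    by_contra hii
    exact hx (by simpa [hii] using congrFun h i)
  simpa using congrFun h i

variable {q d : ℕ}

lemma hammingGraph_neighborFinset (v : Fin d → Fin q) :
    (hammingGraph q d).neighborFinset v =
      (univ.sigma fun i => univ.erase (v i)).image fun x => Function.update v x.1 x.2 := by
  ext u
  simp only [mem_neighborFinset, mem_image, mem_sigma, mem_univ, mem_erase, true_and, and_true,
    Sigma.exists]
  change hammingDist v u = 1 ↔ _
  constructor
  · intro hu
    obtain ⟨i, hi⟩ := card_eq_one.mp hu
    have hdiff (j : Fin d) : v j ≠ u j ↔ j = i := by simpa using Finset.ext_iff.mp hi j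
    refine ⟨i, u i, fun h => (hdiff i).mpr rfl h.symm, ?_⟩
    ext1 j
    rcases eq_or_ne j i with rfl | hj
    · simp
    · simpa [hj] using ((hdiff j).not.mpr hj)
  · rintro ⟨i, c, hc, rfl⟩
    exact hammingDist_update_of_ne hc

lemma sum_neighborFinset_hammingGraph {M : Type*} [AddCommMonoid M] (v : Fin d → Fin q)
    (F : (Fin d → Fin q) → M) :
    ∑ u ∈ (hammingGraph q d).neighborFinset v, F u =
      ∑ i, ∑ c ∈ univ.erase (v i), F (Function.update v i c) := by
  rw [hammingGraph_neighborFinset, sum_image (update_injOn_sigma_erase v), sum_sigma]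

lemma hammingGraph_isRegularOfDegree : (hammingGraph q d).IsRegularOfDegree ((q - 1) * d) := by
  intro v
  rw [← card_neighborFinset_eq_degree, card_eq_sum_ones, sum_neighborFinset_hammingGraph]
  simp [card_erase_of_mem, mul_comm]

end Hamming

section NonzeroMultiples

variable (R : Type*) {V : Type*} [Ring R] [Fintype R] [DecidableEq R] [AddCommGroup V]
  [Module R V] [DecidableEq V]

def nonzeroSmulCount (v g : V) : ℕ :=
  #{e : R | e ≠ 0 ∧ e • v = g}

variable {R} [Fintype V] {ι : Type*} [Fintype ι]

lemma sum_sum_nonzero_smul {M : Type*} [AddCommMonoid M] (w : ι → V) (G : V → M) :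
    ∑ i, ∑ e ∈ univ.erase (0 : R), G (e • w i) =
      ∑ g, (∑ i, nonzeroSmulCount R (w i) g) • G g := by
  have fiberwise (i : ι) : ∑ e ∈ univ.erase (0 : R), G (e • w i) =
      ∑ g, nonzeroSmulCount R (w i) g • G g := by
    rw [← sum_fiberwise' (univ.erase 0) (· • w i) G]
    refine sum_congr rfl fun g _ => ?_
    rw [sum_const, nonzeroSmulCount]
    congr 2
    ext e
    simp [and_comm]
  simp_rw [fiberwise, sum_smul]
  exact sum_comm

lemma add_sum_sum_nonzero_smul {m : ℕ} {w : ι → V}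
    (hw : ∀ g, ∑ i, nonzeroSmulCount R (w i) g + (if g = 0 then 1 else 0) = m) (G : V → ℕ) :
    G 0 + ∑ i, ∑ e ∈ univ.erase (0 : R), G (e • w i) = m * ∑ g, G g :=
  calc G 0 + ∑ i, ∑ e ∈ univ.erase (0 : R), G (e • w i)
      = ∑ g, (∑ i, nonzeroSmulCount R (w i) g + if g = 0 then 1 else 0) * G g := by
        simp [sum_sum_nonzero_smul, add_mul, sum_add_distrib, add_comm]
    _ = m * ∑ g, G g := by simp_rw [hw, mul_sum]

end NonzeroMultiples

section Syndrome

variable {R V : Type*} [Ring R] [AddCommGroup V] [Module R V] {q d : ℕ} (ε : Fin q ≃ R)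
  (w : Fin d → V)

def syndrome (x : Fin d → Fin q) : V :=
  Fintype.linearCombination R w (ε ∘ x)

lemma syndrome_update (x : Fin d → Fin q) (i : Fin d) (c : Fin q) :
    syndrome ε w (Function.update x i c) = syndrome ε w x + (ε c - ε (x i)) • w i := by
  have hupdate : ε ∘ Function.update x i c = ε ∘ x + Pi.single i (ε c - ε (x i)) := by
    ext j
    rcases eq_or_ne j i with rfl | hj <;> simp [*]
  rw [syndrome, hupdate, map_add, Fintype.linearCombination_apply_single, syndrome]

variable [Fintype R] [DecidableEq R]

lemma sum_erase_sub_eq_sum_erase_zero {M : Type*} [AddCommMonoid M] (b : Fin q) (G : R → M) :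
    ∑ c ∈ univ.erase b, G (ε c - ε b) = ∑ e ∈ univ.erase 0, G e :=
  sum_equiv (ε.trans (Equiv.subRight (ε b))) (by simp [sub_eq_zero]) (by simp)

variable [Fintype V] [DecidableEq V]

lemma effDom_hammingGraph_syndrome_mem {m : ℕ}
    (hw : ∀ g, ∑ i, nonzeroSmulCount R (w i) g + (if g = 0 then 1 else 0) = m) (T : Finset V) :
    EffDom (hammingGraph q d) 1 (m * #T) fun x => if syndrome ε w x ∈ T then 1 else 0 := by
  refine ⟨fun _ => ite_le_one le_rfl zero_le_one, fun v => ?_⟩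
  set G : V → ℕ := fun g => if syndrome ε w v + g ∈ T then 1 else 0
  calc (if syndrome ε w v ∈ T then 1 else 0) + ∑ u ∈ (hammingGraph q d).neighborFinset v,
        (if syndrome ε w u ∈ T then 1 else 0)
      = G 0 + ∑ i, ∑ e ∈ univ.erase (0 : R), G (e • w i) := by
        rw [sum_neighborFinset_hammingGraph]
        congr 1
        · simp [G]
        · refine sum_congr rfl fun i _ => ?_
          simp [← sum_erase_sub_eq_sum_erase_zero ε (v i), G, syndrome_update]
    _ = m * ∑ g, G g := add_sum_sum_nonzero_smul hw G
    _ = m * #T := by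
      rw [Fintype.sum_equiv (Equiv.addLeft (syndrome ε w v)) G (fun y => if y ∈ T then 1 else 0)
        fun _ => rfl]
      simp

end Syndrome

section Projective

open Projectivization

open scoped LinearAlgebra.Projectivization

variable {K V : Type*} [Field K] [Fintype K] [DecidableEq K] [AddCommGroup V] [Module K V]
  [DecidableEq V] [Fintype (ℙ K V)]

lemma sum_nonzeroSmulCount_rep {g : V} (hg : g ≠ 0) :
    ∑ P : ℙ K V, nonzeroSmulCount K P.rep g = 1 := by
  have hsmul {P : ℙ K V} {e : K} (he : e • P.rep = g) : mk K g hg = P := by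
    rw [← P.mk_rep, mk_eq_mk_iff' K g P.rep hg P.rep_nonzero]
    exact ⟨e, he⟩
  rw [Fintype.sum_eq_single (mk K g hg)]
  · set P := mk K g hg
    obtain ⟨a, ha⟩ := (mk_eq_mk_iff' K g P.rep hg P.rep_nonzero).mp P.mk_rep.symm
    refine card_eq_one.mpr ⟨a, ?_⟩
    ext e
    simp only [mem_filter, mem_univ, true_and, mem_singleton]
    constructor
    · rintro ⟨-, he⟩
      exact smul_left_injective K P.rep_nonzero (he.trans ha.symm)
    · rintro rfl
      exact ⟨fun h0 => hg (by rw [← ha, h0, zero_smul]), ha⟩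
  · intro P hP
    exact card_eq_zero.mpr (filter_eq_empty_iff.mpr fun e _ ⟨_, he⟩ => hP (hsmul he).symm)

lemma sum_nonzeroSmulCount_sumElim_rep (z m : ℕ) (g : V) :
    ∑ i, nonzeroSmulCount K (Sum.elim (0 : Fin z → V) (fun x : ℙ K V × Fin m => x.1.rep) i) g =
      if g = 0 then z * (Fintype.card K - 1) else m := by
  simp only [Fintype.sum_sum_type, Fintype.sum_prod_type, Sum.elim_inl, Sum.elim_inr,
    Pi.zero_apply, sum_const, card_univ, Fintype.card_fin, ← smul_sum]
  split_ifs with hg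
  · subst hg
    simp [nonzeroSmulCount, filter_ne', card_erase_of_mem, rep_nonzero]
  · rw [sum_nonzeroSmulCount_rep hg]
    simp [nonzeroSmulCount, Ne.symm hg]

end Projective

theorem exists_sum_nonzeroSmulCount_eq (K V : Type*) [Field K] [Fintype K] [DecidableEq K]
    [AddCommGroup V] [Module K V] [Fintype V] [DecidableEq V] {d m : ℕ}
    (h : (Fintype.card K - 1) * d + 1 = Fintype.card V * m) :
    ∃ w : Fin d → V, ∀ g, ∑ i, nonzeroSmulCount K (w i) g + (if g = 0 then 1 else 0) = m := by
  have := Fintype.ofFinite (Projectivization K V)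
  set N := Fintype.card (Projectivization K V)
  have hV : Fintype.card V = N * (Fintype.card K - 1) + 1 := by
    simpa [N, Nat.card_eq_fintype_card] using Projectivization.card' K V
  have hK : 0 < Fintype.card K - 1 := by have := Fintype.one_lt_card (α := K); omega
  have hm : 0 < m := Nat.pos_of_ne_zero fun hm => by simp [hm] at h
  have hNm : N * m ≤ d := Nat.le_of_mul_le_mul_left (by nlinarith) hK
  obtain ⟨z, rfl⟩ : ∃ z, d = z + N * m := ⟨d - N * m, by omega⟩
  have hz : z * (Fintype.card K - 1) + 1 = m := by nlinarith
  let σ : Fin z ⊕ Projectivization K V × Fin m ≃ Fin (z + N * m) :=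
    Fintype.equivFinOfCardEq (by simp [N])
  refine ⟨fun i => Sum.elim 0 (fun x => x.1.rep) (σ.symm i), fun g => ?_⟩
  rw [σ.symm.sum_comp fun i => nonzeroSmulCount K (Sum.elim 0 (fun x => x.1.rep) i) g,
    sum_nonzeroSmulCount_sumElim_rep]
  split_ifs <;> omega

theorem stmt18 (p d a m : ℕ) (hp : p.Prime)
    (h : (p - 1) * d + 1 = p ^ a * m) (hm : ¬ p ∣ m) (k : ℕ) :
    (∃ f, EffDom (hammingGraph p d) 1 k f) ↔ (k ≤ (p - 1) * d + 1 ∧ m ∣ k) := by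
  have hreg := hammingGraph_isRegularOfDegree (q := p) (d := d)
  constructor
  · rintro ⟨f, hf⟩
    refine ⟨by simpa using hf.le_mul_succ hreg (fun _ => ⟨0, hp.pos⟩), ?_⟩
    have hcard := hf.card_mul_eq hreg
    rw [h, Fintype.card_fun, Fintype.card_fin, Fintype.card_fin] at hcard
    have hcop : Nat.Coprime m (p ^ d) :=
      Nat.Coprime.pow_right d (Nat.coprime_comm.mp (hp.coprime_iff_not_dvd.mpr hm))
    exact hcop.dvd_of_dvd_mul_left ⟨(∑ v, f v) * p ^ a, by rw [hcard]; ring⟩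
  · rintro ⟨hk, t, rfl⟩
    have := Fact.mk hp
    obtain ⟨w, hw⟩ :=
      exists_sum_nonzeroSmulCount_eq (ZMod p) (Fin a → ZMod p) (d := d) (by simpa using h)
    have hm0 : 0 < m := Nat.pos_of_ne_zero fun hm0 => by simp [hm0] at h
    have ht : t ≤ #(univ : Finset (Fin a → ZMod p)) := by
      have : m * t ≤ m * p ^ a := by linarith
      simpa using Nat.le_of_mul_le_mul_left this hm0
    obtain ⟨T, -, rfl⟩ := exists_subset_card_eq ht
    exact ⟨_, effDom_hammingGraph_syndrome_mem (ZMod.finEquiv p).toEquiv w hw T⟩
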